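/- arXiv:2112.11849 — 5 statements merged into one kernel-verified Lean document; each statement's English description precedes it below -/
import Mathlib

section
/- For every integer D ≥ 2, the VLSN search graph in all D dimensions for the multidimensional assignment problem with cardinality N = 2 is isomorphic (as a simple graph) to the graph on Fin (D−1) → ZMod 2 in which distinct x and y are adjacent iff either their Hamming distance is 1, or y = x + 𝟙 where 𝟙 is the all-ones vector (the hypercube Q_{D−1} with its main diagonals added). -/
/-- The VLSN search graph in all `D` dimensions for the MAP with cardinality `N = 2`:
vertices are feasible solutions `S : Fin (D-1) → Equiv.Perm (Fin 2)`, and two distinct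
solutions are adjacent iff they differ in exactly one coordinate, or one is obtained
from the other by the dimension-1 move `S' = fun k => S k * Equiv.swap 0 1`. -/
def vlsnAllGraph (D : ℕ) : SimpleGraph (Fin (D - 1) → Equiv.Perm (Fin 2)) where
  Adj S T := S ≠ T ∧
    ((∃! k, S k ≠ T k) ∨ T = fun k => S k * Equiv.swap 0 1)
  symm := by
    constructor
    rintro S T ⟨hne, h⟩
    refine ⟨hne.symm, ?_⟩
    rcases h with ⟨k, hk, hu⟩ | h
    · exact Or.inl ⟨k, hk.symm, fun j hj => hu j hj.symm⟩
    · right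
      subst h
      funext k
      simp [mul_assoc, Equiv.swap_mul_self]
  loopless := ⟨fun S h => h.1 rfl⟩

/-- The hypercube graph `Q_{D-1}` with its main diagonals added: on `Fin (D-1) → ZMod 2`,
distinct `x` and `y` are adjacent iff their Hamming distance is `1`, or
`y = x + 𝟙` where `𝟙` is the all-ones vector. -/
def diagCubeGraph (D : ℕ) : SimpleGraph (Fin (D - 1) → ZMod 2) where
  Adj x y := x ≠ y ∧ (hammingDist x y = 1 ∨ y = x + fun _ => 1)
  symm := by
    constructor
    rintro x y ⟨hne, h⟩
    refine ⟨hne.symm, ?_⟩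
    rcases h with h | h
    · left; rwa [hammingDist_comm]
    · right
      subst h
      funext k
      have h2 : (1 : ZMod 2) + 1 = 0 := by decide
      simp [add_assoc, h2]
  loopless := ⟨fun x h => h.1 rfl⟩


/-- `Equiv.Perm (Fin 2)` as `ZMod 2`, sending `σ` to `σ 0`. -/
def permToZMod : Equiv.Perm (Fin 2) ≃ ZMod 2 where
  toFun σ := σ 0
  invFun x := if x = 0 then 1 else Equiv.swap 0 1
  left_inv := by unfold Function.LeftInverse; decide
  right_inv := by intro x; fin_cases x <;> rfl

lemma permToZMod_ne_iff (σ τ : Equiv.Perm (Fin 2)) :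
    permToZMod σ ≠ permToZMod τ ↔ σ ≠ τ :=
  permToZMod.injective.ne_iff

lemma permToZMod_mul_swap (σ : Equiv.Perm (Fin 2)) :
    permToZMod (σ * Equiv.swap 0 1) = permToZMod σ + 1 := by
  revert σ; decide

lemma card_filter_eq_one_iff {α : Type*} [Fintype α] (P : α → Prop) [DecidablePred P] :
    (Finset.univ.filter P).card = 1 ↔ ∃! a, P a := by
  classical
  rw [Finset.card_eq_one]
  constructor
  · rintro ⟨a, ha⟩
    have h1 : ∀ b, P b ↔ b = a := by
      intro b
      constructor
      · intro hb
        have : b ∈ Finset.univ.filter P := by simp [hb]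
        rw [ha] at this; simpa using this
      · intro hb
        rw [hb]
        have : a ∈ Finset.univ.filter P := by
          rw [ha]; exact Finset.mem_singleton_self a
        simpa using this
    exact ⟨a, (h1 a).2 rfl, fun b hb => (h1 b).1 hb⟩
  · rintro ⟨a, ha, hu⟩
    refine ⟨a, ?_⟩
    ext b
    simp only [Finset.mem_filter, Finset.mem_univ, true_and, Finset.mem_singleton]
    exact ⟨fun hb => hu b hb, fun hb => hb ▸ ha⟩

lemma diag_adj_iff (D : ℕ) (S T : Fin (D - 1) → Equiv.Perm (Fin 2)) :
    (diagCubeGraph D).Adj (fun k => permToZMod (S k)) (fun k => permToZMod (T k)) ↔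
      (vlsnAllGraph D).Adj S T := by
  classical
  have hne : (fun k => permToZMod (S k)) ≠ (fun k => permToZMod (T k)) ↔ S ≠ T := by
    constructor
    · intro h hST; exact h (by rw [hST])
    · intro h hST
      exact h (funext fun k => permToZMod.injective (congrFun hST k))
  have hham : hammingDist (fun k => permToZMod (S k)) (fun k => permToZMod (T k)) = 1 ↔
      ∃! k, S k ≠ T k := by
    unfold hammingDist
    rw [card_filter_eq_one_iff]
    constructor
    · rintro ⟨k, hk, hu⟩
      exact ⟨k, (permToZMod_ne_iff _ _).1 hk,
        fun j hj => hu j ((permToZMod_ne_iff _ _).2 hj)⟩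
    · rintro ⟨k, hk, hu⟩
      exact ⟨k, (permToZMod_ne_iff _ _).2 hk,
        fun j hj => hu j ((permToZMod_ne_iff _ _).1 hj)⟩
  have hswap : ((fun k => permToZMod (T k)) =
        (fun k => permToZMod (S k)) + fun _ => 1) ↔
      (T = fun k => S k * Equiv.swap 0 1) := by
    constructor
    · intro h
      funext k
      apply permToZMod.injective
      rw [permToZMod_mul_swap]
      exact congrFun h k
    · intro h
      funext k
      have : permToZMod (T k) = permToZMod (S k * Equiv.swap 0 1) := by rw [h]
      rw [permToZMod_mul_swap] at this
      exact this
  simp only [diagCubeGraph, vlsnAllGraph, hne, hham, hswap]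

/-- For every integer `D ≥ 2`, the VLSN search graph in all `D` dimensions for the MAP
with cardinality `N = 2` is isomorphic to the hypercube `Q_{D-1}` with its main
diagonals added. -/
theorem vlsnAll_iso_diagCube (D : ℕ) (hD : 2 ≤ D) :
    Nonempty (vlsnAllGraph D ≃g diagCubeGraph D) :=
  ⟨⟨Equiv.piCongrRight fun _ => permToZMod, fun {S T} => diag_adj_iff D S T⟩⟩
end

section
/- (Correctness of the VLSN projection along a single dimension d ≠ 1.) Fix integers D ≥ 2 and N ≥ 1, a cost array c : (Fin D → Fin N) → ℝ, a solution S : Fin (D−1) → Equiv.Perm (Fin N), and an index k₀ : Fin (D−1). Define the projection matrix C : Fin N → Fin N → ℝ by C i j = c(w_{ij}), where w_{ij} : Fin D → Fin N satisfies w_{ij}(0) = i, w_{ij}(k₀.succ) = j, and w_{ij}(k.succ) = (S k)(i) for all k ≠ k₀. Then for every permutation π : Equiv.Perm (Fin N), the MAP objective of the solution Function.update S k₀ π equals ∑_{i : Fin N} C i (π i). -/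
/-- The assignment (cost-array index) `v_S(i) : Fin D → Fin N` associated with solution
`S : Fin (D-1) → Equiv.Perm (Fin N)` and row `i : Fin N`: it sends `0` to `i` and
`k.succ` to `(S k)(i)` for each `k : Fin (D-1)`. -/
def vSol (D N : ℕ) (S : Fin (D - 1) → Equiv.Perm (Fin N)) (i : Fin N) :
    Fin D → Fin N :=
  fun d =>
    if h : (d : ℕ) = 0 then i
    else S ⟨(d : ℕ) - 1, by have := d.isLt; omega⟩ i

/-- The MAP objective (fitness) of solution `S` for cost array `c`:
`f(S) = ∑ i, c (v_S i)`. -/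
def mapObj (D N : ℕ) (c : (Fin D → Fin N) → ℝ)
    (S : Fin (D - 1) → Equiv.Perm (Fin N)) : ℝ :=
  ∑ i : Fin N, c (vSol D N S i)

/-- The VLSN projection index `w_{ij} : Fin D → Fin N` along the single dimension
`k₀` (a dimension other than the first): it sends `0` to `i`, `k₀.succ` to `j`,
and `k.succ` to `(S k)(i)` for all `k ≠ k₀`. -/
def projW (D N : ℕ) (S : Fin (D - 1) → Equiv.Perm (Fin N)) (k₀ : Fin (D - 1))
    (i j : Fin N) : Fin D → Fin N :=
  fun d =>
    if h : (d : ℕ) = 0 then i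
    else if (d : ℕ) = (k₀ : ℕ) + 1 then j
    else S ⟨(d : ℕ) - 1, by have := d.isLt; omega⟩ i

/-- Correctness of the VLSN projection along a single dimension `d ≠ 1`:
with the projection matrix `C i j = c (w_{ij})`, the MAP objective of the solution
`Function.update S k₀ π` equals `∑ i, C i (π i)` for every permutation `π`. -/
theorem vlsn_projection_correct (D N : ℕ) (hD : 2 ≤ D) (hN : 1 ≤ N)
    (c : (Fin D → Fin N) → ℝ) (S : Fin (D - 1) → Equiv.Perm (Fin N))
    (k₀ : Fin (D - 1)) (π : Equiv.Perm (Fin N)) :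
    mapObj D N c (Function.update S k₀ π)
      = ∑ i : Fin N, (fun i j => c (projW D N S k₀ i j)) i (π i) := by
  unfold mapObj
  refine Finset.sum_congr rfl fun i _ => ?_
  congr 1
  funext d
  simp only [vSol, projW]
  split
  · rfl
  · rename_i h0
    by_cases hk : (d : ℕ) = (k₀ : ℕ) + 1
    · rw [if_pos hk]
      have : (⟨(d : ℕ) - 1, by have := d.isLt; omega⟩ : Fin (D - 1)) = k₀ := by
        ext; simp; omega
      rw [this, Function.update_self]
    · rw [if_neg hk]
      have hne : (⟨(d : ℕ) - 1, by have := d.isLt; omega⟩ : Fin (D - 1)) ≠ k₀ := by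
        intro h; apply hk; have := congrArg Fin.val h; simp at this; omega
      rw [Function.update_of_ne hne]
end

section
/- (The VLSN search evaluates an exponentially large neighborhood by solving one LAP.) Fix integers D ≥ 2 and N ≥ 1, a cost array c : (Fin D → Fin N) → ℝ, a solution S : Fin (D−1) → Equiv.Perm (Fin N), and an index k₀ : Fin (D−1). Define the projection matrix C : Fin N → Fin N → ℝ by C i j = c(w_{ij}), where w_{ij} : Fin D → Fin N satisfies w_{ij}(0) = i, w_{ij}(k₀.succ) = j, and w_{ij}(k.succ) = (S k)(i) for all k ≠ k₀. Then the minimum over all permutations π : Equiv.Perm (Fin N) of the MAP objective f(Function.update S k₀ π) equals the optimal value of the linear assignment problem with cost matrix C, i.e., the minimum over all π : Equiv.Perm (Fin N) of ∑_{i : Fin N} C i (π i). -/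
/-- The VLSN search evaluates an exponentially large neighborhood by solving one LAP:
the minimum over all permutations `π` of the MAP objective `f (Function.update S k₀ π)`
equals the optimal value of the linear assignment problem with the projection cost
matrix `C i j = c (w_{ij})`, i.e. the minimum over all `π` of `∑ i, C i (π i)`. -/
theorem vlsn_neighborhood_min_eq_lap (D N : ℕ) (hD : 2 ≤ D) (hN : 1 ≤ N)
    (c : (Fin D → Fin N) → ℝ) (S : Fin (D - 1) → Equiv.Perm (Fin N))
    (k₀ : Fin (D - 1)) :
    Finset.univ.inf' Finset.univ_nonempty
        (fun π : Equiv.Perm (Fin N) => mapObj D N c (Function.update S k₀ π))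
      = Finset.univ.inf' Finset.univ_nonempty
        (fun π : Equiv.Perm (Fin N) =>
          ∑ i : Fin N, (fun i j => c (projW D N S k₀ i j)) i (π i)) := by
  have h : ∀ π : Equiv.Perm (Fin N),
      mapObj D N c (Function.update S k₀ π)
        = ∑ i : Fin N, c (projW D N S k₀ i (π i)) := by
    intro π
    unfold mapObj
    refine Finset.sum_congr rfl fun i _ => ?_
    congr 1
    funext d
    unfold vSol projW
    split_ifs with h0 h1
    · rfl
    · have he : (⟨(d : ℕ) - 1, by have := d.isLt; omega⟩ : Fin (D - 1)) = k₀ :=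
        Fin.ext (by simp only [Fin.val_mk]; omega)
      rw [he, Function.update_self]
    · rw [Function.update_of_ne (by
        intro he
        apply h1
        have := congrArg Fin.val he
        simp at this
        omega)]
  simp only [h]
end

section
/- (Correctness of the VNS projection along a set of dimensions not containing the first.) Fix integers D ≥ 2 and N ≥ 1, a cost array c : (Fin D → Fin N) → ℝ, a solution S : Fin (D−1) → Equiv.Perm (Fin N), and a set A ⊆ Fin (D−1) of dimension indices. Define the projection matrix C : Fin N → Fin N → ℝ by C i j = c(w_{ij}), where w_{ij} : Fin D → Fin N satisfies w_{ij}(0) = i, w_{ij}(k.succ) = (S k)(j) for k ∈ A, and w_{ij}(k.succ) = (S k)(i) for k ∉ A. Then for every permutation π : Equiv.Perm (Fin N), the MAP objective of the solution fun k => if k ∈ A then S k * π else S k equals ∑_{i : Fin N} C i (π i). -/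
/-- The VNS projection index `w_{ij} : Fin D → Fin N` along a set `A` of dimensions
not containing the first: it sends `0` to `i`, `k.succ` to `(S k)(j)` for `k ∈ A`,
and `k.succ` to `(S k)(i)` for `k ∉ A`. -/
def projWSet (D N : ℕ) (S : Fin (D - 1) → Equiv.Perm (Fin N))
    (A : Finset (Fin (D - 1))) (i j : Fin N) : Fin D → Fin N :=
  fun d =>
    if h : (d : ℕ) = 0 then i
    else if (⟨(d : ℕ) - 1, by have := d.isLt; omega⟩ : Fin (D - 1)) ∈ A then
      S ⟨(d : ℕ) - 1, by have := d.isLt; omega⟩ j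
    else S ⟨(d : ℕ) - 1, by have := d.isLt; omega⟩ i

/-- Correctness of the VNS projection along a set `A` of dimensions not containing the
first: with the projection matrix `C i j = c (w_{ij})`, the MAP objective of the
solution `fun k => if k ∈ A then S k * π else S k` equals `∑ i, C i (π i)` for every
permutation `π`. -/
theorem vns_projection_correct (D N : ℕ) (hD : 2 ≤ D) (hN : 1 ≤ N)
    (c : (Fin D → Fin N) → ℝ) (S : Fin (D - 1) → Equiv.Perm (Fin N))
    (A : Finset (Fin (D - 1))) (π : Equiv.Perm (Fin N)) :
    mapObj D N c (fun k => if k ∈ A then S k * π else S k)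
      = ∑ i : Fin N, (fun i j => c (projWSet D N S A i j)) i (π i) := by
  unfold mapObj
  apply Finset.sum_congr rfl
  intro i _
  congr 1
  funext d
  unfold vSol projWSet
  by_cases h : (d : ℕ) = 0
  · simp [h]
  · simp only [h, dif_neg, not_false_iff]
    split <;> simp [Equiv.Perm.mul_apply]
end

section
/- (Correctness of the VNS projection along a set of dimensions containing the first.) Fix integers D ≥ 2 and N ≥ 1, a cost array c : (Fin D → Fin N) → ℝ, a solution S : Fin (D−1) → Equiv.Perm (Fin N), and a set A ⊆ Fin (D−1) of dimension indices (the dimensions held fixed, the permuted set being dimension 1 together with the complement of A). Define the projection matrix C : Fin N → Fin N → ℝ by C i j = c(w_{ij}), where w_{ij} : Fin D → Fin N satisfies w_{ij}(0) = i, w_{ij}(k.succ) = (S k)(i) for k ∈ A, and w_{ij}(k.succ) = (S k)(j) for k ∉ A. Then for every permutation π : Equiv.Perm (Fin N), the MAP objective of the solution fun k => if k ∈ A then S k else S k * π equals ∑_{i : Fin N} C i (π i). -/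
/-- The VNS projection index `w_{ij} : Fin D → Fin N` for a set of permuted dimensions
containing the first, where `A` is the set of dimensions held fixed: it sends `0` to
`i`, `k.succ` to `(S k)(i)` for `k ∈ A`, and `k.succ` to `(S k)(j)` for `k ∉ A`. -/
def projWSetFirst (D N : ℕ) (S : Fin (D - 1) → Equiv.Perm (Fin N))
    (A : Finset (Fin (D - 1))) (i j : Fin N) : Fin D → Fin N :=
  fun d =>
    if h : (d : ℕ) = 0 then i
    else if (⟨(d : ℕ) - 1, by have := d.isLt; omega⟩ : Fin (D - 1)) ∈ A then
      S ⟨(d : ℕ) - 1, by have := d.isLt; omega⟩ i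
    else S ⟨(d : ℕ) - 1, by have := d.isLt; omega⟩ j

/-- Correctness of the VNS projection along a set of dimensions containing the first
(`A` being the set of dimensions held fixed): with the projection matrix
`C i j = c (w_{ij})`, the MAP objective of the solution
`fun k => if k ∈ A then S k else S k * π` equals `∑ i, C i (π i)` for every
permutation `π`. -/
theorem vns_projection_first_correct (D N : ℕ) (hD : 2 ≤ D) (hN : 1 ≤ N)
    (c : (Fin D → Fin N) → ℝ) (S : Fin (D - 1) → Equiv.Perm (Fin N))
    (A : Finset (Fin (D - 1))) (π : Equiv.Perm (Fin N)) :
    mapObj D N c (fun k => if k ∈ A then S k else S k * π)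
      = ∑ i : Fin N, (fun i j => c (projWSetFirst D N S A i j)) i (π i) := by
  unfold mapObj
  refine Finset.sum_congr rfl fun i _ => ?_
  congr 1
  funext d
  simp only [vSol, projWSetFirst]
  split
  · rfl
  · split
    · rfl
    · rfl
end
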